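/- For every positive integer n, with N := 2n+1, the space Sym_N(ℂ)×Sym_N(ℂ) is the direct sum of the subspace T(L_n^{(1)}, L_n^{(2)}) and the subspace P := { (X, Y) ∈ Sym_N(ℂ)×Sym_N(ℂ) : X_{ij} = 0 unless i = j = n+1, and Y_{ij} = 0 unless i ≤ n+1, j ≤ n+1 and |i−j| ≤ 1 }. -/

import Mathlib

open Matrix

noncomputable section

/-- `Λ_n(λ)`: the `n × n` matrix with `(i,j)` entry `λ` if `i + j = n + 1`, `1` if
`i + j = n + 2`, and `0` otherwise (1-based indices). -/
def lamM (n : ℕ) (lam : ℂ) : Matrix (Fin n) (Fin n) ℂ :=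
  Matrix.of fun i j =>
    if (i : ℕ) + 1 + ((j : ℕ) + 1) = n + 1 then lam
    else if (i : ℕ) + 1 + ((j : ℕ) + 1) = n + 2 then 1 else 0

/-- `Δ_n`: the `n × n` matrix with `(i,j)` entry `1` if `i + j = n + 1` and `0`
otherwise (1-based indices). -/
def delM (n : ℕ) : Matrix (Fin n) (Fin n) ℂ :=
  Matrix.of fun i j => if (i : ℕ) + 1 + ((j : ℕ) + 1) = n + 1 then 1 else 0

/-- `F_n`: the `n × (n+1)` matrix with `F_n(i,j) = 1` exactly when `j = i`. -/
def FM (n : ℕ) : Matrix (Fin n) (Fin (n + 1)) ℂ :=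
  Matrix.of fun i j => if (j : ℕ) = (i : ℕ) then 1 else 0

/-- `G_n`: the `n × (n+1)` matrix with `G_n(i,j) = 1` exactly when `j = i + 1`. -/
def GM (n : ℕ) : Matrix (Fin n) (Fin (n + 1)) ℂ :=
  Matrix.of fun i j => if (j : ℕ) = (i : ℕ) + 1 then 1 else 0

/-- `L_n^{(1)} = [[0, F_nᵀ], [F_n, 0]]`, a symmetric `(2n+1) × (2n+1)` matrix. -/
def L1M (n : ℕ) : Matrix (Fin (2 * n + 1)) (Fin (2 * n + 1)) ℂ :=
  Matrix.reindex (finSumFinEquiv.trans (finCongr (by omega)))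
    (finSumFinEquiv.trans (finCongr (by omega)))
    (Matrix.fromBlocks 0 (FM n)ᵀ (FM n) 0)

/-- `L_n^{(2)} = [[0, G_nᵀ], [G_n, 0]]`, a symmetric `(2n+1) × (2n+1)` matrix. -/
def L2M (n : ℕ) : Matrix (Fin (2 * n + 1)) (Fin (2 * n + 1)) ℂ :=
  Matrix.reindex (finSumFinEquiv.trans (finCongr (by omega)))
    (finSumFinEquiv.trans (finCongr (by omega)))
    (Matrix.fromBlocks 0 (GM n)ᵀ (GM n) 0)

theorem lamM_isSymm (n : ℕ) (lam : ℂ) : (lamM n lam).IsSymm := by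
  unfold Matrix.IsSymm lamM
  ext i j
  simp only [Matrix.transpose_apply, Matrix.of_apply]
  split_ifs <;> first | rfl | omega

theorem delM_isSymm (n : ℕ) : (delM n).IsSymm := by
  unfold Matrix.IsSymm delM
  ext i j
  simp only [Matrix.transpose_apply, Matrix.of_apply]
  split_ifs <;> first | rfl | omega

theorem L1M_isSymm (n : ℕ) : (L1M n).IsSymm := by
  unfold Matrix.IsSymm L1M
  rw [Matrix.transpose_reindex, Matrix.fromBlocks_transpose]
  simp

theorem L2M_isSymm (n : ℕ) : (L2M n).IsSymm := by
  unfold Matrix.IsSymm L2M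
  rw [Matrix.transpose_reindex, Matrix.fromBlocks_transpose]
  simp

/-- The type of canonical summands: `H_k(λ)`, `K_k`, `L_k`. -/
inductive CanType where
  | H : ℕ → ℂ → CanType
  | K : ℕ → CanType
  | L : ℕ → CanType

/-- The size of a canonical pair. -/
def CanType.size : CanType → ℕ
  | .H k _ => k
  | .K k => k
  | .L k => 2 * k + 1

/-- The size parameter of a canonical pair. -/
def CanType.param : CanType → ℕ
  | .H k _ => k
  | .K k => k
  | .L k => k

/-- The first matrix of a canonical pair. -/
def CanType.A : (c : CanType) → Matrix (Fin c.size) (Fin c.size) ℂ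
  | .H k _ => delM k
  | .K k => lamM k 0
  | .L k => L1M k

/-- The second matrix of a canonical pair. -/
def CanType.B : (c : CanType) → Matrix (Fin c.size) (Fin c.size) ℂ
  | .H k lam => lamM k lam
  | .K k => delM k
  | .L k => L2M k

/-- Congruence of pairs of square complex matrices (over possibly different index
types): `(A', B') = (Sᵀ A S, Sᵀ B S)` for some invertible `S`. -/
def CongruentPairs {ι κ : Type} [Fintype ι] [Fintype κ] [DecidableEq ι] [DecidableEq κ]
    (p : Matrix ι ι ℂ × Matrix ι ι ℂ) (q : Matrix κ κ ℂ × Matrix κ κ ℂ) : Prop :=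
  ∃ S : Matrix ι κ ℂ, (∃ T : Matrix κ ι ℂ, S * T = 1 ∧ T * S = 1) ∧
    q.1 = Sᵀ * p.1 * S ∧ q.2 = Sᵀ * p.2 * S

/-- The space of pairs of symmetric `ι × ι` complex matrices, as a subspace of all pairs. -/
def SymPair (ι : Type) [Fintype ι] : Submodule ℂ (Matrix ι ι ℂ × Matrix ι ι ℂ) where
  carrier := {p | p.1.IsSymm ∧ p.2.IsSymm}
  add_mem' ha hb := ⟨ha.1.add hb.1, ha.2.add hb.2⟩
  zero_mem' := ⟨Matrix.isSymm_zero, Matrix.isSymm_zero⟩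
  smul_mem' c p hp := ⟨hp.1.smul c, hp.2.smul c⟩

/-- The linear map `C ↦ (CᵀA + AC, CᵀB + BC)`. -/
def congMap {ι : Type} [Fintype ι] (A B : Matrix ι ι ℂ) :
    Matrix ι ι ℂ →ₗ[ℂ] Matrix ι ι ℂ × Matrix ι ι ℂ where
  toFun C := (Cᵀ * A + A * C, Cᵀ * B + B * C)
  map_add' C D := by
    simp only [Matrix.transpose_add, Matrix.add_mul, Matrix.mul_add, Prod.mk_add_mk, Prod.ext_iff]
    constructor <;> abel
  map_smul' c C := by
    simp only [Matrix.transpose_smul, Matrix.smul_mul, Matrix.mul_smul, RingHom.id_apply,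
      Prod.smul_mk, smul_add]

/-- `T(A,B) = {(CᵀA + AC, CᵀB + BC) : C}`, the tangent space to the congruence class. -/
def TSpace {ι : Type} [Fintype ι] (A B : Matrix ι ι ℂ) :
    Submodule ℂ (Matrix ι ι ℂ × Matrix ι ι ℂ) :=
  LinearMap.range (congMap A B)

/-- The pattern space determined by two sets of positions: pairs of symmetric matrices
supported on `I1` resp. `I2`. -/
def Pattern {ι : Type} [Fintype ι] (I1 I2 : Set (ι × ι)) :
    Submodule ℂ (Matrix ι ι ℂ × Matrix ι ι ℂ) where
  carrier := {p | p.1.IsSymm ∧ p.2.IsSymm ∧ (∀ i j, (i, j) ∉ I1 → p.1 i j = 0) ∧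
    (∀ i j, (i, j) ∉ I2 → p.2 i j = 0)}
  add_mem' := by
    rintro a b ⟨ha1, ha2, ha3, ha4⟩ ⟨hb1, hb2, hb3, hb4⟩
    exact ⟨ha1.add hb1, ha2.add hb2,
      fun i j h => by show a.1 i j + b.1 i j = 0; rw [ha3 i j h, hb3 i j h, add_zero],
      fun i j h => by show a.2 i j + b.2 i j = 0; rw [ha4 i j h, hb4 i j h, add_zero]⟩
  zero_mem' := ⟨Matrix.isSymm_zero, Matrix.isSymm_zero, fun _ _ _ => rfl, fun _ _ _ => rfl⟩
  smul_mem' := by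
    rintro c a ⟨ha1, ha2, ha3, ha4⟩
    exact ⟨ha1.smul c, ha2.smul c,
      fun i j h => by show c * a.1 i j = 0; rw [ha3 i j h, mul_zero],
      fun i j h => by show c * a.2 i j = 0; rw [ha4 i j h, mul_zero]⟩

theorem Pattern_le {ι : Type} [Fintype ι] (I1 I2 : Set (ι × ι)) :
    Pattern I1 I2 ≤ SymPair ι := fun _ hp => ⟨hp.1, hp.2.1⟩


end

/-!
Write `C = [[P, Q], [R, S]]` for the block decomposition `2n + 1 = (n + 1) + n`. Then
`CᵀL⁽¹⁾ + L⁽¹⁾C = [[RᵀF + FᵀR, *], [SᵀF + FP, QᵀFᵀ + FQ]]`, and likewise with `G`. Since `F` and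
`G` pick out rows `k` and `k + 1`, each block equation is a shift relation among the entries of
a single block of `C`.

If the pair lies in the pattern space, its two upper-left blocks make `R` antisymmetric on its
square part, constant along antidiagonals away from the diagonal and zero on its boundary columns,
so `R = 0` and the whole pair vanishes. If the pair is zero, the other blocks give `Q = 0`,
`P = c • 1` and `S = -c • 1`, so the stabilizer of `(L⁽¹⁾, L⁽²⁾)` has dimension at most `1`.
Then `dim T + dim (pattern space) ≥ (N² - 1) + (N + 1) ≥ dim (Sym_N × Sym_N)`.
-/

noncomputable section

section Arrays

variable {K : Type*} {n : ℕ}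

theorem apply_eq_ite_of_toeplitz [Zero K] {p : ℕ → ℕ → K}
    (hshift : ∀ a b, a < n → b < n → p (a + 1) (b + 1) = p a b)
    (hlast : ∀ a, a < n → p a n = 0) (hzero : ∀ a, a < n → p (a + 1) 0 = 0) :
    ∀ a b, a ≤ n → b ≤ n → p a b = if a = b then p 0 0 else 0 := by
  have hiter : ∀ t a b, a + t ≤ n → b + t ≤ n → p (a + t) (b + t) = p a b := by
    intro t
    induction t with
    | zero => simp
    | succ t ih =>
      intro a b ha hb
      rw [← add_assoc, ← add_assoc, hshift _ _ (by omega) (by omega), ih a b (by omega) (by omega)]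
  intro a b ha hb
  rcases lt_trichotomy a b with hab | rfl | hab
  · obtain ⟨t, rfl⟩ : ∃ t, n = b + t := ⟨n - b, by omega⟩
    rw [if_neg hab.ne, ← hiter t a b (by omega) le_rfl]
    exact hlast _ (by omega)
  · simpa using hiter a 0 0 (by omega) (by omega)
  · obtain ⟨c, rfl⟩ : ∃ c, a = c + 1 + b := ⟨a - b - 1, by omega⟩
    have hdown := hiter b (c + 1) 0 ha (by omega)
    rw [zero_add] at hdown
    rw [if_neg hab.ne', hdown]
    exact hzero c (by omega)

variable [CommRing K] [NoZeroDivisors K] [CharZero K]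

/- `q` is constant along antidiagonals, and every antidiagonal of the rectangle meets the
diagonal or the subdiagonal, where `q` vanishes. -/
theorem apply_eq_zero_of_hankel_antisymm {q : ℕ → ℕ → K}
    (hanti : ∀ a b, a < n → b < n → q a b + q b a = 0)
    (hanti_succ : ∀ a b, a < n → b < n → q (a + 1) b + q (b + 1) a = 0) :
    ∀ a b, a ≤ n → b < n → q a b = 0 := by
  have hdiag : ∀ a, a < n → q a a = 0 := fun a ha => add_self_eq_zero.mp (hanti a a ha ha)
  have hsub : ∀ a, a < n → q (a + 1) a = 0 :=
    fun a ha => add_self_eq_zero.mp (hanti_succ a a ha ha)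
  have hiter : ∀ t a b, a + t ≤ n → b + t < n → q a (b + t) = q (a + t) b := by
    intro t
    induction t with
    | zero => simp
    | succ t ih =>
      intro a b ha hb
      have h₁ := hanti_succ a (b + t) (by omega) (by omega)
      have h₂ := hanti a (b + t + 1) (by omega) hb
      rw [show a + (t + 1) = a + 1 + t by omega, ← ih (a + 1) b (by omega) (by omega)]
      linear_combination h₂ - h₁
  intro a b ha hb
  rcases le_or_gt a b with hab | hab
  · obtain ⟨t, c, rfl, hc⟩ : ∃ t c, b = c + t ∧ (c = a + t ∨ c = a + t + 1) :=
      ⟨(b - a) / 2, b - (b - a) / 2, by omega, by omega⟩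
    rw [hiter t a c (by omega) hb]
    rcases hc with rfl | rfl
    · exact hdiag _ (by omega)
    · linear_combination hanti (a + t) (a + t + 1) (by omega) (by omega) - hsub (a + t) (by omega)
  · obtain ⟨t, c, rfl, hc⟩ : ∃ t c, a = c + t ∧ (c = b + t ∨ c = b + t + 1) :=
      ⟨(a - b) / 2, a - (a - b) / 2, by omega, by omega⟩
    rw [← hiter t c b ha (by omega)]
    rcases hc with rfl | rfl
    · exact hdiag _ (by omega)
    · exact hsub _ (by omega)

/- Away from the diagonal `r` is constant along antidiagonals; such an antidiagonal reaches column
`0` if it lies below the diagonal and `a + b < n`, column `n` if it lies above and `a + b ≥ n`, and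
antisymmetry swaps the two remaining cases into these. -/
theorem apply_eq_zero_of_antisymm_shift {r : ℕ → ℕ → K}
    (hanti : ∀ a b, a < n → b < n → r a b + r b a = 0) (hlast : ∀ a, a < n → r a n = 0)
    (hzero : ∀ a, 0 < a → a < n → r a 0 = 0)
    (hshift : ∀ a b, b + 2 ≤ a → a < n → r a (b + 1) + r b (a + 1) = 0) :
    ∀ a b, a < n → b ≤ n → r a b = 0 := by
  have hbelow : ∀ t a b, b + t + 1 ≤ a → a + t < n → r a (b + t) = r (a + t) b := by
    intro t
    induction t with
    | zero => simp
    | succ t ih =>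
      intro a b hab ha
      have h₁ := hshift a (b + t) (by omega) (by omega)
      have h₂ := hanti (a + 1) (b + t) (by omega) (by omega)
      rw [← add_assoc, show a + (t + 1) = a + 1 + t by omega, ← ih (a + 1) b (by omega) (by omega)]
      linear_combination h₁ - h₂
  have habove : ∀ t a b, a + t < b → b + t ≤ n → r (a + t) b = r a (b + t) := by
    intro t
    induction t with
    | zero => simp
    | succ t ih =>
      intro a b hab hb
      have h₁ := hanti (a + t + 1) b (by omega) (by omega)
      have h₂ := hshift b (a + t) (by omega) (by omega)
      rw [← add_assoc, show b + (t + 1) = b + 1 + t by omega, ← ih a (b + 1) (by omega) (by omega)]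
      linear_combination h₁ - h₂
  have hlow : ∀ a b, b < a → a + b < n → r a b = 0 := fun a b hab hn => by
    simpa [hzero (a + b) (by omega) hn] using hbelow b a 0 (by omega) hn
  have hhigh : ∀ a b, a < b → b ≤ n → n ≤ a + b → r a b = 0 := fun a b hab hb hn => by
    obtain ⟨c, rfl⟩ : ∃ c, a = c + (n - b) := ⟨a - (n - b), by omega⟩
    rw [habove (n - b) c b hab (by omega), show b + (n - b) = n by omega]
    exact hlast c (by omega)
  intro a b ha hb
  rcases lt_trichotomy a b with hab | rfl | hab
  · rcases le_or_gt n (a + b) with hn | hn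
    · exact hhigh a b hab hb hn
    · linear_combination hanti a b ha (by omega) - hlow b a hab (by omega)
  · exact add_self_eq_zero.mp (hanti a a ha ha)
  · rcases le_or_gt n (a + b) with hn | hn
    · linear_combination hanti a b ha (by omega) - hhigh b a hab ha.le (by omega)
    · exact hlow a b hab hn

end Arrays

section ShiftedMatrices

variable {K : Type*} {n : ℕ}

def Matrix.extendByZero [Zero K] {a b : ℕ} (M : Matrix (Fin a) (Fin b) K) (i j : ℕ) : K :=
  if h : i < a ∧ j < b then M ⟨i, h.1⟩ ⟨j, h.2⟩ else 0

theorem Matrix.extendByZero_of_lt [Zero K] {a b : ℕ} (M : Matrix (Fin a) (Fin b) K) {i j : ℕ}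
    (hi : i < a) (hj : j < b) : M.extendByZero i j = M ⟨i, hi⟩ ⟨j, hj⟩ :=
  dif_pos ⟨hi, hj⟩

theorem Matrix.eq_diagonal_of_toeplitz [Zero K] (P : Matrix (Fin (n + 1)) (Fin (n + 1)) K)
    (hshift : ∀ k l : Fin n, P k.succ l.succ = P k.castSucc l.castSucc)
    (hlast : ∀ k : Fin n, P k.castSucc (Fin.last n) = 0) (hzero : ∀ k : Fin n, P k.succ 0 = 0) :
    P = diagonal fun _ => P 0 0 := by
  ext i j
  have := apply_eq_ite_of_toeplitz (n := n) (p := P.extendByZero)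
    (fun a b ha hb => by
      rw [P.extendByZero_of_lt (by omega) (by omega), P.extendByZero_of_lt (by omega) (by omega)]
      exact hshift ⟨a, ha⟩ ⟨b, hb⟩)
    (fun a ha => by rw [P.extendByZero_of_lt (by omega) (by omega)]; exact hlast ⟨a, ha⟩)
    (fun a ha => by rw [P.extendByZero_of_lt (by omega) (by omega)]; exact hzero ⟨a, ha⟩)
    i j (by omega) (by omega)
  rw [P.extendByZero_of_lt i.isLt j.isLt, P.extendByZero_of_lt (by omega) (by omega)] at this
  simpa [diagonal_apply, Fin.ext_iff] using this

variable [CommRing K] [NoZeroDivisors K] [CharZero K]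

theorem Matrix.eq_zero_of_hankel_antisymm (Q : Matrix (Fin (n + 1)) (Fin n) K)
    (hcast : ∀ k l : Fin n, Q l.castSucc k + Q k.castSucc l = 0)
    (hsucc : ∀ k l : Fin n, Q l.succ k + Q k.succ l = 0) : Q = 0 := by
  ext i j
  have := apply_eq_zero_of_hankel_antisymm (n := n) (q := Q.extendByZero)
    (fun a b ha hb => by
      rw [Q.extendByZero_of_lt (by omega) hb, Q.extendByZero_of_lt (by omega) ha]
      exact hcast ⟨b, hb⟩ ⟨a, ha⟩)
    (fun a b ha hb => by
      rw [Q.extendByZero_of_lt (by omega) hb, Q.extendByZero_of_lt (by omega) ha]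
      exact hsucc ⟨b, hb⟩ ⟨a, ha⟩)
    i j (by omega) j.isLt
  rwa [Q.extendByZero_of_lt i.isLt j.isLt] at this

theorem Matrix.eq_zero_of_antisymm_shift (R : Matrix (Fin n) (Fin (n + 1)) K)
    (hanti : ∀ k l : Fin n, R l k.castSucc + R k l.castSucc = 0)
    (hlast : ∀ k : Fin n, R k (Fin.last n) = 0) (hzero : ∀ k : Fin n, 0 < (k : ℕ) → R k 0 = 0)
    (hshift : ∀ k l : Fin n, (l : ℕ) + 2 ≤ k → R k l.succ + R l k.succ = 0) : R = 0 := by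
  ext i j
  have := apply_eq_zero_of_antisymm_shift (n := n) (r := R.extendByZero)
    (fun a b ha hb => by
      rw [R.extendByZero_of_lt ha (by omega), R.extendByZero_of_lt hb (by omega)]
      exact hanti ⟨b, hb⟩ ⟨a, ha⟩)
    (fun a ha => by rw [R.extendByZero_of_lt ha (by omega)]; exact hlast ⟨a, ha⟩)
    (fun a ha₀ ha => by rw [R.extendByZero_of_lt ha (by omega)]; exact hzero ⟨a, ha⟩ ha₀)
    (fun a b hab ha => by
      rw [R.extendByZero_of_lt ha (by omega), R.extendByZero_of_lt (by omega) (by omega)]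
      exact hshift ⟨a, ha⟩ ⟨b, by omega⟩ hab)
    i j i.isLt (by omega)
  rwa [R.extendByZero_of_lt i.isLt j.isLt] at this

end ShiftedMatrices

section BlockAlgebra

variable {α ι l m : Type*}

theorem fromBlocks_transpose_mul_add_mul [Fintype l] [Fintype m] [CommSemiring α]
    (P : Matrix m m α) (Q : Matrix m l α) (R : Matrix l m α) (S : Matrix l l α)
    (M : Matrix l m α) :
    (fromBlocks P Q R S)ᵀ * fromBlocks 0 Mᵀ M 0 + fromBlocks 0 Mᵀ M 0 * fromBlocks P Q R S =
      fromBlocks (Rᵀ * M + (Rᵀ * M)ᵀ) (Sᵀ * M + M * P)ᵀ (Sᵀ * M + M * P)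
        ((M * Q)ᵀ + M * Q) := by
  simp only [fromBlocks_transpose, fromBlocks_multiply, fromBlocks_add, transpose_add,
    transpose_mul, transpose_transpose, Matrix.mul_zero, Matrix.zero_mul, zero_add, add_zero]
  congr 1
  abel

theorem reindex_transpose_mul_add_mul {κ : Type*} [Fintype ι] [Fintype κ]
    [NonUnitalNonAssocSemiring α] (e : κ ≃ ι) (A C : Matrix κ κ α) :
    (reindex e e C)ᵀ * reindex e e A + reindex e e A * reindex e e C =
      reindex e e (Cᵀ * A + A * C) := by
  simp only [reindex_apply]
  rw [transpose_submatrix, submatrix_mul_equiv, submatrix_mul_equiv]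
  rfl

theorem exists_eq_reindex_fromBlocks (e : m ⊕ l ≃ ι) (C : Matrix ι ι α) :
    ∃ P Q R S, C = reindex e e (fromBlocks P Q R S) :=
  ⟨_, _, _, _, by rw [fromBlocks_toBlocks, Equiv.apply_symm_apply]⟩

theorem reindex_fromBlocks_eq_zero_iff [Zero α] (e : m ⊕ l ≃ ι) {P : Matrix m m α}
    {Q : Matrix m l α} {R : Matrix l m α} {S : Matrix l l α} :
    reindex e e (fromBlocks P Q R S) = 0 ↔ P = 0 ∧ Q = 0 ∧ R = 0 ∧ S = 0 := by
  rw [← fromBlocks_inj, fromBlocks_zero, ← (reindex e e).apply_eq_iff_eq]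
  simp

end BlockAlgebra

section Shifts

variable {α : Type*} {n : ℕ}

theorem FM_apply (k : Fin n) (i : Fin (n + 1)) : FM n k i = if k.castSucc = i then 1 else 0 := by
  simp [FM, Fin.ext_iff, eq_comm]

theorem GM_apply (k : Fin n) (i : Fin (n + 1)) : GM n k i = if k.succ = i then 1 else 0 := by
  simp [GM, Fin.ext_iff, eq_comm]

theorem FM_mul_apply (M : Matrix (Fin (n + 1)) α ℂ) (k : Fin n) (j : α) :
    (FM n * M) k j = M k.castSucc j := by
  simp [mul_apply, FM_apply]

theorem GM_mul_apply (M : Matrix (Fin (n + 1)) α ℂ) (k : Fin n) (j : α) :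
    (GM n * M) k j = M k.succ j := by
  simp [mul_apply, GM_apply]

theorem mul_FM_apply_castSucc (M : Matrix α (Fin n) ℂ) (i : α) (k : Fin n) :
    (M * FM n) i k.castSucc = M i k := by
  simp [mul_apply, FM_apply]

theorem mul_FM_apply_last (M : Matrix α (Fin n) ℂ) (i : α) : (M * FM n) i (Fin.last n) = 0 := by
  simp [mul_apply, FM_apply, Fin.castSucc_ne_last]

theorem mul_GM_apply_succ (M : Matrix α (Fin n) ℂ) (i : α) (k : Fin n) :
    (M * GM n) i k.succ = M i k := by
  simp [mul_apply, GM_apply]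

theorem mul_GM_apply_zero (M : Matrix α (Fin n) ℂ) (i : α) : (M * GM n) i 0 = 0 := by
  simp [mul_apply, GM_apply, Fin.succ_ne_zero]

end Shifts

section BlockEquations

variable {n : ℕ}

def blockEquiv (n : ℕ) : Fin (n + 1) ⊕ Fin n ≃ Fin (2 * n + 1) :=
  finSumFinEquiv.trans (finCongr (by omega))

@[simp]
theorem blockEquiv_inl_val (i : Fin (n + 1)) : (blockEquiv n (.inl i) : ℕ) = i :=
  rfl

theorem L1M_eq_reindex (n : ℕ) :
    L1M n = reindex (blockEquiv n) (blockEquiv n) (fromBlocks 0 (FM n)ᵀ (FM n) 0) :=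
  rfl

theorem L2M_eq_reindex (n : ℕ) :
    L2M n = reindex (blockEquiv n) (blockEquiv n) (fromBlocks 0 (GM n)ᵀ (GM n) 0) :=
  rfl

theorem congMap_reindex_fromBlocks (P : Matrix (Fin (n + 1)) (Fin (n + 1)) ℂ)
    (Q : Matrix (Fin (n + 1)) (Fin n) ℂ) (R : Matrix (Fin n) (Fin (n + 1)) ℂ)
    (S : Matrix (Fin n) (Fin n) ℂ) :
    congMap (L1M n) (L2M n) (reindex (blockEquiv n) (blockEquiv n) (fromBlocks P Q R S)) =
      (reindex (blockEquiv n) (blockEquiv n)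
        (fromBlocks (Rᵀ * FM n + (Rᵀ * FM n)ᵀ) (Sᵀ * FM n + FM n * P)ᵀ (Sᵀ * FM n + FM n * P)
          ((FM n * Q)ᵀ + FM n * Q)),
      reindex (blockEquiv n) (blockEquiv n)
        (fromBlocks (Rᵀ * GM n + (Rᵀ * GM n)ᵀ) (Sᵀ * GM n + GM n * P)ᵀ (Sᵀ * GM n + GM n * P)
          ((GM n * Q)ᵀ + GM n * Q))) := by
  simp only [congMap, LinearMap.coe_mk, AddHom.coe_mk, L1M_eq_reindex, L2M_eq_reindex,
    reindex_transpose_mul_add_mul, fromBlocks_transpose_mul_add_mul]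

theorem eq_zero_of_FM_GM_support (R : Matrix (Fin n) (Fin (n + 1)) ℂ)
    (hF : ∀ i j, ¬(i = Fin.last n ∧ j = Fin.last n) → (Rᵀ * FM n + (Rᵀ * FM n)ᵀ) i j = 0)
    (hG : ∀ i j : Fin (n + 1), (i : ℕ) + 2 ≤ j → (Rᵀ * GM n + (Rᵀ * GM n)ᵀ) i j = 0) :
    R = 0 := by
  apply R.eq_zero_of_antisymm_shift
  · intro k l
    simpa only [Matrix.add_apply, transpose_apply, mul_FM_apply_castSucc] using
      hF k.castSucc l.castSucc (by simp [Fin.castSucc_ne_last])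
  · intro k
    simpa only [Matrix.add_apply, transpose_apply, mul_FM_apply_castSucc, mul_FM_apply_last,
      zero_add] using hF k.castSucc (Fin.last n) (by simp [Fin.castSucc_ne_last])
  · intro k hk
    simpa only [Matrix.add_apply, transpose_apply, mul_GM_apply_succ, mul_GM_apply_zero,
      add_zero] using hG 0 k.succ (by rw [Fin.val_zero, Fin.val_succ]; omega)
  · intro k l hkl
    simpa only [Matrix.add_apply, transpose_apply, mul_GM_apply_succ, add_comm] using
      hG l.succ k.succ (by rw [Fin.val_succ, Fin.val_succ]; omega)

theorem eq_zero_of_FM_GM_antisymm (Q : Matrix (Fin (n + 1)) (Fin n) ℂ)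
    (hF : (FM n * Q)ᵀ + FM n * Q = 0) (hG : (GM n * Q)ᵀ + GM n * Q = 0) : Q = 0 :=
  Q.eq_zero_of_hankel_antisymm
    (fun k l => by
      simpa only [Matrix.add_apply, Matrix.zero_apply, transpose_apply, FM_mul_apply] using
        congr_fun₂ hF k l)
    (fun k l => by
      simpa only [Matrix.add_apply, Matrix.zero_apply, transpose_apply, GM_mul_apply] using
        congr_fun₂ hG k l)

theorem eq_diagonal_of_FM_GM (P : Matrix (Fin (n + 1)) (Fin (n + 1)) ℂ)
    (S : Matrix (Fin n) (Fin n) ℂ) (hF : Sᵀ * FM n + FM n * P = 0)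
    (hG : Sᵀ * GM n + GM n * P = 0) :
    P = diagonal (fun _ => P 0 0) ∧ S = -diagonal (fun _ => P 0 0) := by
  have hFcast : ∀ k l, S l k + P k.castSucc l.castSucc = 0 := fun k l => by
    simpa only [Matrix.add_apply, Matrix.zero_apply, transpose_apply, FM_mul_apply,
      mul_FM_apply_castSucc] using congr_fun₂ hF k l.castSucc
  have hGsucc : ∀ k l, S l k + P k.succ l.succ = 0 := fun k l => by
    simpa only [Matrix.add_apply, Matrix.zero_apply, transpose_apply, GM_mul_apply,
      mul_GM_apply_succ] using congr_fun₂ hG k l.succ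
  have hP : P = diagonal (fun _ => P 0 0) := P.eq_diagonal_of_toeplitz
    (fun k l => add_left_cancel ((hGsucc k l).trans (hFcast k l).symm))
    (fun k => by
      simpa only [Matrix.add_apply, Matrix.zero_apply, FM_mul_apply, mul_FM_apply_last,
        zero_add] using congr_fun₂ hF k (Fin.last n))
    (fun k => by
      simpa only [Matrix.add_apply, Matrix.zero_apply, GM_mul_apply, mul_GM_apply_zero,
        zero_add] using congr_fun₂ hG k 0)
  refine ⟨hP, ?_⟩
  ext l k
  rw [eq_neg_of_add_eq_zero_left (hFcast k l), hP]
  simp [diagonal_apply, eq_comm]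

theorem eq_zero_of_congMap_eq_zero {C : Matrix (Fin (2 * n + 1)) (Fin (2 * n + 1)) ℂ}
    (hC : congMap (L1M n) (L2M n) C = 0)
    (h₀ : C (blockEquiv n (.inl 0)) (blockEquiv n (.inl 0)) = 0) : C = 0 := by
  obtain ⟨P, Q, R, S, rfl⟩ := exists_eq_reindex_fromBlocks (blockEquiv n) C
  simp only [congMap_reindex_fromBlocks, Prod.mk_eq_zero, reindex_fromBlocks_eq_zero_iff] at hC
  obtain ⟨⟨hF₁₁, -, hF₂₁, hF₂₂⟩, hG₁₁, -, hG₂₁, hG₂₂⟩ := hC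
  have hR : R = 0 :=
    eq_zero_of_FM_GM_support R (fun i j _ => by rw [hF₁₁]; rfl) (fun i j _ => by rw [hG₁₁]; rfl)
  have hQ : Q = 0 := eq_zero_of_FM_GM_antisymm Q hF₂₂ hG₂₂
  obtain ⟨hP, hS⟩ := eq_diagonal_of_FM_GM P S hF₂₁ hG₂₁
  rw [show P 0 0 = 0 by simpa using h₀, diagonal_zero] at hP hS
  simp [hP, hQ, hR, hS]

def LPattern (n : ℕ) :
    Submodule ℂ (Matrix (Fin (2 * n + 1)) (Fin (2 * n + 1)) ℂ ×
      Matrix (Fin (2 * n + 1)) (Fin (2 * n + 1)) ℂ) :=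
  Pattern
    {pq : Fin (2 * n + 1) × Fin (2 * n + 1) | (pq.1 : ℕ) = n ∧ (pq.2 : ℕ) = n}
    {pq : Fin (2 * n + 1) × Fin (2 * n + 1) | (pq.1 : ℕ) ≤ n ∧ (pq.2 : ℕ) ≤ n ∧
      ((pq.1 : ℕ) ≤ (pq.2 : ℕ) + 1 ∧ (pq.2 : ℕ) ≤ (pq.1 : ℕ) + 1)}

theorem eq_zero_of_apply_blockEquiv_inl {α : Type*} [Zero α]
    (M : Matrix (Fin (2 * n + 1)) (Fin (2 * n + 1)) α)
    (hout : ∀ i j : Fin (2 * n + 1), n < (i : ℕ) ∨ n < (j : ℕ) → M i j = 0)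
    (hin : ∀ a b : Fin (n + 1), M (blockEquiv n (.inl a)) (blockEquiv n (.inl b)) = 0) :
    M = 0 := by
  ext i j
  by_cases h : (i : ℕ) ≤ n ∧ (j : ℕ) ≤ n
  · exact hin ⟨i, by omega⟩ ⟨j, by omega⟩
  · exact hout i j (by omega)

theorem disjoint_TSpace_LPattern (n : ℕ) : Disjoint (TSpace (L1M n) (L2M n)) (LPattern n) := by
  rw [Submodule.disjoint_def]
  rintro _ ⟨C, rfl⟩ ⟨-, -, hX, hY⟩
  obtain ⟨P, Q, R, S, rfl⟩ := exists_eq_reindex_fromBlocks (blockEquiv n) C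
  rw [congMap_reindex_fromBlocks] at hX hY ⊢
  have hR : R = 0 := eq_zero_of_FM_GM_support R
    (fun i j hij => by
      simpa using hX (blockEquiv n (.inl i)) (blockEquiv n (.inl j))
        (by simpa [Fin.ext_iff] using hij))
    (fun i j hij => by
      simpa using hY (blockEquiv n (.inl i)) (blockEquiv n (.inl j))
        (by simp only [Set.mem_ofPred_eq, blockEquiv_inl_val]; omega))
  subst hR
  refine Prod.ext (eq_zero_of_apply_blockEquiv_inl _ (fun i j h => hX i j ?_) fun a b => by simp)
    (eq_zero_of_apply_blockEquiv_inl _ (fun i j h => hY i j ?_) fun a b => by simp)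
  all_goals simp only [Set.mem_ofPred_eq]; omega

end BlockEquations

section Dimensions

theorem isSymm_transpose_mul_add_mul {ι α : Type*} [Fintype ι] [CommSemiring α]
    {A : Matrix ι ι α} (hA : A.IsSymm) (C : Matrix ι ι α) : (Cᵀ * A + A * C).IsSymm := by
  rw [IsSymm, transpose_add, transpose_mul, transpose_mul, transpose_transpose, hA.eq, add_comm]

theorem TSpace_le_SymPair {ι : Type} [Fintype ι] {A B : Matrix ι ι ℂ} (hA : A.IsSymm)
    (hB : B.IsSymm) : TSpace A B ≤ SymPair ι := by
  rintro _ ⟨C, rfl⟩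
  exact ⟨isSymm_transpose_mul_add_mul hA C, isSymm_transpose_mul_add_mul hB C⟩

theorem Matrix.IsSymm.eq_zero_of_forall_le {ι α : Type*} [LinearOrder ι] [Zero α]
    {M : Matrix ι ι α} (hM : M.IsSymm) (h : ∀ i j, i ≤ j → M i j = 0) : M = 0 := by
  ext i j
  rcases le_total i j with hij | hij
  · exact h i j hij
  · rw [← hM.apply]
    exact h j i hij

theorem finrank_SymPair_le (ι : Type) [Fintype ι] [LinearOrder ι] :
    Module.finrank ℂ (SymPair ι) ≤ Fintype.card ι * (Fintype.card ι + 1) := by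
  let upper : Matrix ι ι ℂ →ₗ[ℂ] ({p : ι × ι // p.1 ≤ p.2} → ℂ) :=
    LinearMap.pi fun p => entryLinearMap ℂ ℂ p.1.1 p.1.2
  have hinj : Function.Injective ((upper.prodMap upper).comp (SymPair ι).subtype) := by
    rw [injective_iff_map_eq_zero]
    rintro ⟨⟨X, Y⟩, hX, hY⟩ h
    simp only [LinearMap.comp_apply, Submodule.coe_subtype, LinearMap.prodMap_apply,
      Prod.mk_eq_zero, funext_iff] at h
    ext1
    exact Prod.ext (hX.eq_zero_of_forall_le fun i j hij => h.1 ⟨(i, j), hij⟩)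
      (hY.eq_zero_of_forall_le fun i j hij => h.2 ⟨(i, j), hij⟩)
  have hcard : 2 * Fintype.card {p : ι × ι // p.1 ≤ p.2} =
      Fintype.card ι * (Fintype.card ι + 1) := by
    have := Nat.add_one_mul_choose_eq (Fintype.card ι) 1
    rw [Nat.choose_one_right] at this
    rw [← Fintype.card_congr Sym2.sortEquiv, Sym2.card]
    linarith
  calc Module.finrank ℂ (SymPair ι)
      ≤ Module.finrank ℂ (({p : ι × ι // p.1 ≤ p.2} → ℂ) × ({p : ι × ι // p.1 ≤ p.2} → ℂ)) :=
        LinearMap.finrank_le_finrank_of_injective hinj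
    _ = Fintype.card ι * (Fintype.card ι + 1) := by
      rw [Module.finrank_prod, Module.finrank_pi, ← two_mul, hcard]

theorem finrank_TSpace_add_one (n : ℕ) :
    (2 * n + 1) * (2 * n + 1) ≤ Module.finrank ℂ (TSpace (L1M n) (L2M n)) + 1 := by
  let x₀ := blockEquiv n (.inl 0)
  have hinj : Function.Injective
      ((entryLinearMap ℂ ℂ x₀ x₀).comp (LinearMap.ker (congMap (L1M n) (L2M n))).subtype) := by
    rw [injective_iff_map_eq_zero]
    rintro ⟨C, hC⟩ h₀
    exact Subtype.ext (eq_zero_of_congMap_eq_zero hC h₀)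
  have hker := LinearMap.finrank_le_finrank_of_injective hinj
  have hrank := LinearMap.finrank_range_add_finrank_ker (congMap (L1M n) (L2M n))
  simp only [Module.finrank_self, Module.finrank_matrix, Fintype.card_fin, mul_one] at hker hrank
  rw [TSpace]
  omega

/-- The positions `(i, j)`, `i ≤ j`, of a symmetric tridiagonal `(n+1) × (n+1)` block are
indexed by `i + j ∈ {0, …, 2n}`. -/
def tridiagMap (n : ℕ) :
    (Fin (2 * n + 1) → ℂ) →ₗ[ℂ] Matrix (Fin (2 * n + 1)) (Fin (2 * n + 1)) ℂ where
  toFun d := of fun i j =>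
    if h : (i : ℕ) ≤ n ∧ (j : ℕ) ≤ n ∧ (i : ℕ) ≤ j + 1 ∧ (j : ℕ) ≤ i + 1 then
      d ⟨i + j, by omega⟩
    else 0
  map_add' d d' := by
    ext i j
    simp only [of_apply, Matrix.add_apply, Pi.add_apply]
    split_ifs <;> simp
  map_smul' c d := by
    ext i j
    simp only [of_apply, Matrix.smul_apply, Pi.smul_apply, RingHom.id_apply]
    split_ifs <;> simp

theorem tridiagMap_apply {n : ℕ} (d : Fin (2 * n + 1) → ℂ) (i j : Fin (2 * n + 1)) :
    tridiagMap n d i j =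
      if h : (i : ℕ) ≤ n ∧ (j : ℕ) ≤ n ∧ (i : ℕ) ≤ j + 1 ∧ (j : ℕ) ≤ i + 1 then
        d ⟨i + j, by omega⟩
      else 0 :=
  rfl

theorem finrank_LPattern (n : ℕ) : 2 * n + 2 ≤ Module.finrank ℂ (LPattern n) := by
  let x₀ : Fin (2 * n + 1) := ⟨n, by omega⟩
  let g := (LinearMap.toSpanSingleton ℂ _ (single x₀ x₀ (1 : ℂ))).prodMap (tridiagMap n)
  have hmem : ∀ v, g v ∈ LPattern n := by
    rintro ⟨c, d⟩
    refine ⟨?_, ?_, fun i j hij => ?_, fun i j hij => ?_⟩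
    · simp [g, IsSymm, transpose_single]
    · ext i j
      simp only [g, LinearMap.prodMap_apply, transpose_apply, tridiagMap_apply]
      split_ifs <;> first | rfl | omega | simp only [add_comm]
    · simp only [Set.mem_ofPred_eq, not_and] at hij
      simp only [g, LinearMap.prodMap_apply, LinearMap.toSpanSingleton_apply, smul_single,
        smul_eq_mul, mul_one, single_apply, Fin.ext_iff, ite_eq_right_iff, and_imp, x₀]
      omega
    · simp only [Set.mem_ofPred_eq] at hij
      simp only [g, LinearMap.prodMap_apply, tridiagMap_apply, dif_neg hij]
  have hinj : Function.Injective g := by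
    rw [injective_iff_map_eq_zero]
    rintro ⟨c, d⟩ h
    simp only [g, LinearMap.prodMap_apply, LinearMap.toSpanSingleton_apply, Prod.mk_eq_zero] at h
    refine Prod.ext (by simpa [x₀] using congr_fun₂ h.1 x₀ x₀) (funext fun t => ?_)
    have := congr_fun₂ h.2 ⟨t / 2, by omega⟩ ⟨t - t / 2, by omega⟩
    rw [tridiagMap_apply, dif_pos (by simp only; omega)] at this
    simpa [show t / 2 + (t - t / 2) = (t : ℕ) by omega] using this
  have hdim : Module.finrank ℂ (ℂ × (Fin (2 * n + 1) → ℂ)) = 2 * n + 2 := by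
    rw [Module.finrank_prod, Module.finrank_self, Module.finrank_fintype_fun_eq_card,
      Fintype.card_fin]
    ring
  rw [← hdim]
  exact LinearMap.finrank_le_finrank_of_injective (f := g.codRestrict _ hmem)
    fun _ _ h => hinj (congrArg Subtype.val h)

end Dimensions

theorem L_diagonal_block_general (n : ℕ) :
    Disjoint (TSpace (L1M n) (L2M n))
      (Pattern
        {pq : Fin (2 * n + 1) × Fin (2 * n + 1) | (pq.1 : ℕ) = n ∧ (pq.2 : ℕ) = n}
        {pq : Fin (2 * n + 1) × Fin (2 * n + 1) | (pq.1 : ℕ) ≤ n ∧ (pq.2 : ℕ) ≤ n ∧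
          ((pq.1 : ℕ) ≤ (pq.2 : ℕ) + 1 ∧ (pq.2 : ℕ) ≤ (pq.1 : ℕ) + 1)}) ∧
    TSpace (L1M n) (L2M n) ⊔
      Pattern
        {pq : Fin (2 * n + 1) × Fin (2 * n + 1) | (pq.1 : ℕ) = n ∧ (pq.2 : ℕ) = n}
        {pq : Fin (2 * n + 1) × Fin (2 * n + 1) | (pq.1 : ℕ) ≤ n ∧ (pq.2 : ℕ) ≤ n ∧
          ((pq.1 : ℕ) ≤ (pq.2 : ℕ) + 1 ∧ (pq.2 : ℕ) ≤ (pq.1 : ℕ) + 1)} =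
      SymPair (Fin (2 * n + 1)) := by
  have hdisj := disjoint_TSpace_LPattern n
  refine ⟨hdisj, Submodule.eq_of_le_of_finrank_le
    (sup_le (TSpace_le_SymPair (L1M_isSymm n) (L2M_isSymm n)) (Pattern_le _ _)) ?_⟩
  have hsup := Submodule.finrank_sup_add_finrank_inf_eq (TSpace (L1M n) (L2M n)) (LPattern n)
  rw [hdisj.eq_bot, finrank_bot] at hsup
  have hT := finrank_TSpace_add_one n
  have hP := finrank_LPattern n
  have hSym := finrank_SymPair_le (Fin (2 * n + 1))
  rw [Fintype.card_fin] at hSym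
  change _ ≤ Module.finrank ℂ ↥(TSpace (L1M n) (L2M n) ⊔ LPattern n)
  nlinarith

/-- **Diagonal block `L_n`.** With `N = 2n + 1`,
`Sym_N × Sym_N = T(L_n^{(1)}, L_n^{(2)}) ⊕ P`, where `P` consists of pairs `(X, Y)` of
symmetric matrices with `X i j = 0` unless `i = j = n + 1`, and `Y i j = 0` unless
`i ≤ n + 1`, `j ≤ n + 1` and `|i − j| ≤ 1` (1-based indices). -/
theorem L_diagonal_block (n : ℕ) (hn : 0 < n) :
    Disjoint (TSpace (L1M n) (L2M n))
      (Pattern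
        {pq : Fin (2 * n + 1) × Fin (2 * n + 1) | (pq.1 : ℕ) = n ∧ (pq.2 : ℕ) = n}
        {pq : Fin (2 * n + 1) × Fin (2 * n + 1) | (pq.1 : ℕ) ≤ n ∧ (pq.2 : ℕ) ≤ n ∧
          ((pq.1 : ℕ) ≤ (pq.2 : ℕ) + 1 ∧ (pq.2 : ℕ) ≤ (pq.1 : ℕ) + 1)}) ∧
    TSpace (L1M n) (L2M n) ⊔
      Pattern
        {pq : Fin (2 * n + 1) × Fin (2 * n + 1) | (pq.1 : ℕ) = n ∧ (pq.2 : ℕ) = n}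
        {pq : Fin (2 * n + 1) × Fin (2 * n + 1) | (pq.1 : ℕ) ≤ n ∧ (pq.2 : ℕ) ≤ n ∧
          ((pq.1 : ℕ) ≤ (pq.2 : ℕ) + 1 ∧ (pq.2 : ℕ) ≤ (pq.1 : ℕ) + 1)} =
      SymPair (Fin (2 * n + 1)) :=
  L_diagonal_block_general n

end
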